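/- arXiv:2008.00256 — 3 statements merged into one kernel-verified Lean document; each statement's English description precedes it below -/
import Mathlib

section
/- Let α > 0, N ∈ ℕ, L > 0 with 1 − 2^{N − αL/2} ≥ 1/2, and x, h ∈ ℝ^d with x ≠ 0 such that |x + ℓh| ≥ 2^{L/2}|x| for all ℓ ∈ {1, …, N}. Then the N-th difference of g(y) = |y|^{−α} satisfies |Δ_h^N g(x)| ≥ (1/2)|x|^{−α}. -/
/-!
Split off the `ℓ = 0` term `(-1)^N ‖x‖^{-α}` of the difference. The other terms are evaluated
at points with `‖x + ℓh‖ ≥ 2^{L/2}‖x‖`, so each value is at most `2^{-αL/2}‖x‖^{-α}`, and their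
binomial weights add up to `2^N - 1`. Hence
`|Δ_h^N g(x)| ≥ ‖x‖^{-α} (1 - 2^{N-αL/2}) ≥ ‖x‖^{-α} / 2`.
-/

/-- The `N`-th order forward difference of a real-valued function. -/
noncomputable def forwardDiffR {E : Type*} [AddCommGroup E] [Module ℝ E]
    (N : ℕ) (h : E) (f : E → ℝ) (x : E) : ℝ :=
  ∑ ℓ ∈ Finset.range (N + 1), (-1 : ℝ) ^ (N - ℓ) * (N.choose ℓ : ℝ) * f (x + (ℓ : ℝ) • h)

open Finset

theorem sum_range_choose_succ (N : ℕ) :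
    ∑ i ∈ range N, (N.choose (i + 1) : ℝ) = 2 ^ N - 1 := by
  have h := Nat.sum_range_choose N
  rw [sum_range_succ', Nat.choose_zero_right] at h
  rw [eq_sub_iff_add_eq]
  exact_mod_cast h

section

variable {E : Type*} [AddCommGroup E] [Module ℝ E]

theorem forwardDiffR_eq_add_sum (N : ℕ) (h : E) (f : E → ℝ) (x : E) :
    forwardDiffR N h f x = (-1) ^ N * f x + ∑ i ∈ range N,
      (-1 : ℝ) ^ (N - (i + 1)) * (N.choose (i + 1) : ℝ) * f (x + ((i + 1 : ℕ) : ℝ) • h) := by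
  simp [forwardDiffR, sum_range_succ', add_comm]

theorem abs_sub_le_abs_forwardDiffR {N : ℕ} {h : E} {f : E → ℝ} {x : E} {c : ℝ}
    (hc : ∀ ℓ : ℕ, 1 ≤ ℓ → ℓ ≤ N → |f (x + (ℓ : ℝ) • h)| ≤ c) :
    |f x| - (2 ^ N - 1) * c ≤ |forwardDiffR N h f x| := by
  rw [forwardDiffR_eq_add_sum]
  set R := ∑ i ∈ range N,
      (-1 : ℝ) ^ (N - (i + 1)) * (N.choose (i + 1) : ℝ) * f (x + ((i + 1 : ℕ) : ℝ) • h)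
  have hR : |R| ≤ (2 ^ N - 1) * c := by
    rw [← sum_range_choose_succ, sum_mul]
    refine (abs_sum_le_sum_abs _ _).trans (sum_le_sum fun i hi => ?_)
    rw [abs_mul, abs_mul, abs_pow, abs_neg, abs_one, one_pow, one_mul, Nat.abs_cast]
    exact mul_le_mul_of_nonneg_left (hc _ i.succ_pos (mem_range.1 hi)) (Nat.cast_nonneg _)
  have hlead : |(-1 : ℝ) ^ N * f x| = |f x| := by simp
  linarith [abs_sub_abs_le_abs_add ((-1 : ℝ) ^ N * f x) R]

end

theorem rpow_neg_le_mul_rpow_neg {a r s α : ℝ} (ha : 0 < a) (hr : 0 < r) (hα : 0 ≤ α)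
    (has : a * r ≤ s) : s ^ (-α) ≤ a ^ (-α) * r ^ (-α) := by
  rw [← Real.mul_rpow ha.le hr.le]
  exact Real.rpow_le_rpow_of_nonpos (by positivity) has (neg_nonpos.2 hα)

theorem stmt_11_general (d N : ℕ) (α L : ℝ) (hα : 0 < α)
    (hNL : (1 : ℝ) - 2 ^ ((N : ℝ) - α * L / 2) ≥ 1 / 2)
    (x h : EuclideanSpace ℝ (Fin d)) (hx : x ≠ 0)
    (hsep : ∀ ℓ : ℕ, 1 ≤ ℓ → ℓ ≤ N → (2 : ℝ) ^ (L / 2) * ‖x‖ ≤ ‖x + (ℓ : ℝ) • h‖) :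
    (1 / 2) * ‖x‖ ^ (-α) ≤ |forwardDiffR N h (fun y => ‖y‖ ^ (-α)) x| := by
  have hx_pos : 0 < ‖x‖ := norm_pos_iff.2 hx
  have hgx_pos : 0 < ‖x‖ ^ (-α) := Real.rpow_pos_of_pos hx_pos _
  set c := ((2 : ℝ) ^ (L / 2)) ^ (-α) * ‖x‖ ^ (-α)
  have hfar : (2 ^ N - 1) * c ≤ 2 ^ ((N : ℝ) - α * L / 2) * ‖x‖ ^ (-α) := by
    have hexp : (2 : ℝ) ^ N * ((2 : ℝ) ^ (L / 2)) ^ (-α) = 2 ^ ((N : ℝ) - α * L / 2) := by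
      rw [← Real.rpow_natCast, ← Real.rpow_mul zero_le_two, ← Real.rpow_add two_pos]
      ring_nf
    have hc_nonneg : 0 ≤ c := by positivity
    rw [← hexp, mul_assoc]
    linarith
  have hdiff := abs_sub_le_abs_forwardDiffR (h := h) (f := fun y => ‖y‖ ^ (-α)) (x := x) (c := c)
    fun ℓ hℓ₁ hℓ₂ => by
      rw [abs_of_nonneg (Real.rpow_nonneg (norm_nonneg _) _)]
      exact rpow_neg_le_mul_rpow_neg (by positivity) hx_pos hα.le (hsep ℓ hℓ₁ hℓ₂)
  rw [abs_of_pos hgx_pos] at hdiff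
  calc (1 / 2) * ‖x‖ ^ (-α) ≤ (1 - 2 ^ ((N : ℝ) - α * L / 2)) * ‖x‖ ^ (-α) :=
        mul_le_mul_of_nonneg_right hNL hgx_pos.le
    _ ≤ _ := by linarith

/-- Lower bound for the `N`-th difference of `g(y) = |y|^{-α}`: if `1 − 2^{N−αL/2} ≥ 1/2`
and `|x + ℓh| ≥ 2^{L/2}|x|` for `ℓ = 1,…,N`, then `|Δ_h^N g(x)| ≥ (1/2)|x|^{-α}`. -/
theorem stmt_11 (d N : ℕ) (hN : 1 ≤ N) (α L : ℝ) (hα : 0 < α) (hL : 0 < L)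
    (hNL : (1 : ℝ) - 2 ^ ((N : ℝ) - α * L / 2) ≥ 1 / 2)
    (x h : EuclideanSpace ℝ (Fin d)) (hx : x ≠ 0)
    (hsep : ∀ ℓ : ℕ, 1 ≤ ℓ → ℓ ≤ N → (2 : ℝ) ^ (L / 2) * ‖x‖ ≤ ‖x + (ℓ : ℝ) • h‖) :
    (1 / 2) * ‖x‖ ^ (-α) ≤ |forwardDiffR N h (fun y => ‖y‖ ^ (-α)) x| :=
  stmt_11_general d N α L hα hNL x h hx hsep
end

section
/- Let 1 ≤ p < u < ∞, let ψ : ℝ^d → [0,1] be measurable with ψ(x) = 1 for |x| ≤ 1 and ψ(x) = 0 for |x| ≥ 3/2, and set f_α(x) = ψ(x)|x|^{−α} for α > 0. Then f_α ∈ M^u_p(ℝ^d) if α ≤ d/u, and f_α ∉ M^u_p(ℝ^d) if α > d/u. Moreover, for α = d/u, the quantity |B(0,r)|^{1/u − 1/p}(∫_{B(0,r)} |f_α|^p dx)^{1/p} does not tend to 0 as r → 0, hence f_{d/u} does not belong to the closure of smooth bounded functions in M^u_p. -/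
open MeasureTheory Metric ENNReal Filter

open Module Topology

/-!
Write `n` for the dimension and `β = α p`. Scaling the Haar measure gives
`∫_{B(0,R)} |x|^{-β} = R^{n-β} ∫_{B(0,1)} |x|^{-β}`, and the last integral is finite for `β < n`.
As `f_α = |x|^{-α}` on the unit ball, the Morrey quotient at `(0, r)` equals `c r^{n/u-α}`
with `c > 0` for `r ≤ 1`: it blows up as `r → 0` when `α > n/u` and is constant when `α = n/u`.
For `α ≤ n/u` and `r ≤ 1`, a ball `B(y, r)` either lies in `B(0, 3r)` or stays at distance
`≥ r` from the origin, so in both cases `∫_{B(y,r)} |x|^{-β} ≲ r^{n-β}` and the quotient is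
`≲ r^{n/u-α} ≤ 1`; for `r ≥ 1` the compact support of `f_α` and `1/u - 1/p ≤ 0` bound it.
-/

theorem ENNReal.rpow_le_rpow_of_nonpos {x y : ℝ≥0∞} {z : ℝ} (hxy : x ≤ y) (hz : z ≤ 0) :
    y ^ z ≤ x ^ z := by
  rw [← neg_neg z, ENNReal.rpow_neg y, ENNReal.rpow_neg x]
  exact ENNReal.inv_le_inv.2 (ENNReal.rpow_le_rpow hxy (neg_nonneg.2 hz))

theorem ofReal_rpow_le_of_abs_le_rpow_neg {a t α p : ℝ} (ht : 0 ≤ t) (hp : 0 ≤ p)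
    (h : |a| ≤ t ^ (-α)) : ENNReal.ofReal (|a| ^ p) ≤ ENNReal.ofReal (t ^ (-(α * p))) := by
  rw [← neg_mul, Real.rpow_mul ht]
  exact ENNReal.ofReal_le_ofReal (Real.rpow_le_rpow (abs_nonneg a) h hp)

/-- `|B(y,r)|^{1/u-1/p} ‖f‖_{L_p(B(y,r))}`; its supremum over all balls is `‖f | M^u_p‖`. -/
noncomputable def morreyQuotient {X : Type*} [PseudoMetricSpace X] [MeasurableSpace X]
    (μ : Measure X) (p u : ℝ) (f : X → ℝ) (y : X) (r : ℝ) : ℝ≥0∞ :=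
  μ (ball y r) ^ (1 / u - 1 / p) * (∫⁻ x in ball y r, ENNReal.ofReal (|f x| ^ p) ∂μ) ^ (1 / p)

section AddHaar

variable {E : Type*} [NormedAddCommGroup E] [MeasurableSpace E] [BorelSpace E]
  (μ : Measure E) [μ.IsAddHaarMeasure]

theorem morreyQuotient_le_of_one_le {p u : ℝ} (hp : 0 < p) (hpu : p ≤ u) (f : E → ℝ) (y : E)
    {r : ℝ} (hr : 1 ≤ r) :
    morreyQuotient μ p u f y r ≤
      μ (ball (0 : E) 1) ^ (1 / u - 1 / p) * (∫⁻ x, ENNReal.ofReal (|f x| ^ p) ∂μ) ^ (1 / p) := by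
  have hvol : μ (ball (0 : E) 1) ≤ μ (ball y r) := by
    rw [← Measure.addHaar_ball_center μ y]
    exact measure_mono (ball_subset_ball hr)
  exact mul_le_mul' (ENNReal.rpow_le_rpow_of_nonpos hvol
      (sub_nonpos.2 (one_div_le_one_div_of_le hp hpu)))
    (ENNReal.rpow_le_rpow (setLIntegral_le_lintegral _ _) (by positivity))

variable [NormedSpace ℝ E] [FiniteDimensional ℝ E]

theorem lintegral_ball_zero_norm_rpow_neg (β : ℝ) {R : ℝ} (hR : 0 < R) :
    ∫⁻ x in ball (0 : E) R, ENNReal.ofReal (‖x‖ ^ (-β)) ∂μ =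
      ENNReal.ofReal (R ^ ((finrank ℝ E : ℝ) - β)) *
        ∫⁻ x in ball (0 : E) 1, ENNReal.ofReal (‖x‖ ^ (-β)) ∂μ := by
  set g : E → ℝ≥0∞ := fun x => ENNReal.ofReal (‖x‖ ^ (-β))
  have hpre : (R • · : E → E) ⁻¹' ball 0 R = ball 0 1 := by
    ext x
    simp [norm_smul, abs_of_pos hR, hR]
  have hscale : ∀ x : E, g (R • x) = ENNReal.ofReal (R ^ (-β)) * g x := fun x => by
    show ENNReal.ofReal (‖R • x‖ ^ (-β)) = _
    rw [← ENNReal.ofReal_mul (by positivity), norm_smul, Real.norm_eq_abs, abs_of_pos hR,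
      Real.mul_rpow hR.le (norm_nonneg x)]
  have hmap := setLIntegral_map (μ := μ) (measurableSet_ball (x := (0 : E)) (ε := R))
    (by fun_prop : Measurable g) (measurable_const_smul R)
  simp only [Measure.map_addHaar_smul μ hR.ne', hpre, Measure.restrict_smul, lintegral_smul_measure,
    hscale, smul_eq_mul] at hmap
  have hRn : 0 < R ^ finrank ℝ E := pow_pos hR _
  rw [lintegral_const_mul' _ _ ofReal_ne_top, abs_of_pos (inv_pos.2 hRn)] at hmap
  calc ∫⁻ x in ball (0 : E) R, g x ∂μ
      = ENNReal.ofReal (R ^ finrank ℝ E) *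
          (ENNReal.ofReal (R ^ finrank ℝ E)⁻¹ * ∫⁻ x in ball (0 : E) R, g x ∂μ) := by
        rw [← mul_assoc, ← ENNReal.ofReal_mul hRn.le, mul_inv_cancel₀ hRn.ne', ofReal_one, one_mul]
    _ = _ := by
        rw [hmap, ← mul_assoc, ← ENNReal.ofReal_mul hRn.le, ← Real.rpow_natCast,
          ← Real.rpow_add hR, sub_eq_add_neg]

variable [Nontrivial E]

theorem lintegral_ball_zero_norm_rpow_neg_ne_top {β : ℝ} (hβ : β < finrank ℝ E) :
    ∫⁻ x in ball (0 : E) 1, ENNReal.ofReal (‖x‖ ^ (-β)) ∂μ ≠ ∞ := by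
  refine (Integrable.lintegral_lt_top (μ := μ.restrict (ball 0 1)) ?_).ne
  refine integrableOn_ball_of_norm_le_rpow (C := 1) finrank_pos hβ
    (Eventually.of_forall fun x => ?_)
    (by fun_prop : Measurable fun x : E => ‖x‖ ^ (-β)).aestronglyMeasurable
  rw [one_mul, Real.norm_of_nonneg (by positivity)]

theorem lintegral_ball_zero_norm_rpow_neg_ne_zero (β : ℝ) :
    ∫⁻ x in ball (0 : E) 1, ENNReal.ofReal (‖x‖ ^ (-β)) ∂μ ≠ 0 := by
  refine ((setLIntegral_pos_iff (by fun_prop)).2 ?_).ne'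
  have hsub : ball (0 : E) 1 \ {0} ⊆
      Function.support (fun x : E => ENNReal.ofReal (‖x‖ ^ (-β))) ∩ ball 0 1 :=
    fun x hx => ⟨(ENNReal.ofReal_pos.2 (Real.rpow_pos_of_pos (norm_pos_iff.2 hx.2) _)).ne', hx.1⟩
  calc 0 < μ (ball (0 : E) 1) := measure_ball_pos μ 0 one_pos
    _ = μ (ball (0 : E) 1 \ {0}) := (measure_sdiff_null (measure_singleton 0)).symm
    _ ≤ _ := measure_mono hsub

theorem exists_lintegral_ball_norm_rpow_neg_le {β : ℝ} (hβ₀ : 0 ≤ β) (hβ : β < finrank ℝ E) :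
    ∃ C ≠ ∞, ∀ (y : E) (r : ℝ), 0 < r →
      ∫⁻ x in ball y r, ENNReal.ofReal (‖x‖ ^ (-β)) ∂μ ≤
        ENNReal.ofReal (r ^ ((finrank ℝ E : ℝ) - β)) * C := by
  refine ⟨ENNReal.ofReal (3 ^ ((finrank ℝ E : ℝ) - β)) *
      ∫⁻ x in ball (0 : E) 1, ENNReal.ofReal (‖x‖ ^ (-β)) ∂μ + μ (ball 0 1),
    add_ne_top.2 ⟨mul_ne_top ofReal_ne_top (lintegral_ball_zero_norm_rpow_neg_ne_top μ hβ),
      measure_ball_lt_top.ne⟩, fun y r hr => ?_⟩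
  rw [mul_add]
  rcases lt_or_ge ‖y‖ (2 * r) with hy | hy
  · have hsub : ball y r ⊆ ball (0 : E) (3 * r) := fun x hx => by
      rw [mem_ball_zero_iff]
      rw [mem_ball, dist_eq_norm] at hx
      linarith [norm_le_norm_add_norm_sub' x y]
    refine le_add_right ?_
    calc ∫⁻ x in ball y r, ENNReal.ofReal (‖x‖ ^ (-β)) ∂μ
        ≤ ∫⁻ x in ball (0 : E) (3 * r), ENNReal.ofReal (‖x‖ ^ (-β)) ∂μ := lintegral_mono_set hsub
      _ = _ := by
        rw [lintegral_ball_zero_norm_rpow_neg μ β (by positivity),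
          Real.mul_rpow (by norm_num) hr.le, ENNReal.ofReal_mul (by positivity),
          mul_comm (ENNReal.ofReal (3 ^ _)), mul_assoc]
  · have hfar : ∀ x ∈ ball y r, ENNReal.ofReal (‖x‖ ^ (-β)) ≤ ENNReal.ofReal (r ^ (-β)) :=
      fun x hx => by
        rw [mem_ball, dist_eq_norm] at hx
        have hrx : r ≤ ‖x‖ := by linarith [norm_le_norm_add_norm_sub' y x, norm_sub_rev x y]
        exact ENNReal.ofReal_le_ofReal (Real.rpow_le_rpow_of_nonpos hr hrx (by linarith))
    refine le_add_left ?_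
    calc ∫⁻ x in ball y r, ENNReal.ofReal (‖x‖ ^ (-β)) ∂μ
        ≤ ∫⁻ _ in ball y r, ENNReal.ofReal (r ^ (-β)) ∂μ :=
          setLIntegral_mono' measurableSet_ball hfar
      _ = _ := by
        rw [setLIntegral_const, Measure.addHaar_ball μ y hr.le, ← mul_assoc,
          ← ENNReal.ofReal_mul (by positivity), ← Real.rpow_natCast, ← Real.rpow_add hr,
          neg_add_eq_sub]

theorem measure_ball_rpow_mul_ofReal_rpow_mul_rpow (y : E) {p u α r : ℝ} (hp : 0 < p) (hr : 0 < r)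
    (A : ℝ≥0∞) :
    μ (ball y r) ^ (1 / u - 1 / p) *
        (ENNReal.ofReal (r ^ ((finrank ℝ E : ℝ) - α * p)) * A) ^ (1 / p) =
      ENNReal.ofReal r ^ ((finrank ℝ E : ℝ) / u - α) *
        (μ (ball (0 : E) 1) ^ (1 / u - 1 / p) * A ^ (1 / p)) := by
  have hr₀ : ENNReal.ofReal r ≠ 0 := (ENNReal.ofReal_pos.2 hr).ne'
  have hexp : (finrank ℝ E : ℝ) / u - α =
      finrank ℝ E * (1 / u - 1 / p) + ((finrank ℝ E : ℝ) - α * p) * (1 / p) := by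
    field_simp
    ring
  rw [Measure.addHaar_ball μ y hr.le, mul_rpow_of_ne_top ofReal_ne_top measure_ball_lt_top.ne,
    mul_rpow_of_nonneg _ _ (by positivity), ENNReal.ofReal_pow hr.le,
    ← ENNReal.ofReal_rpow_of_pos hr, ← ENNReal.rpow_natCast, ← ENNReal.rpow_mul, ← ENNReal.rpow_mul,
    hexp,
    ENNReal.rpow_add _ _ hr₀ ofReal_ne_top]
  ring

theorem exists_morreyQuotient_le {p u α : ℝ} (hp : 0 < p) (hα : 0 ≤ α)
    (hαp : α * p < finrank ℝ E) {f : E → ℝ} (hf : ∀ x, |f x| ≤ ‖x‖ ^ (-α)) :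
    ∃ M ≠ ∞, ∀ (y : E) (r : ℝ), 0 < r →
      morreyQuotient μ p u f y r ≤ ENNReal.ofReal r ^ ((finrank ℝ E : ℝ) / u - α) * M := by
  obtain ⟨C, hC, hball⟩ := exists_lintegral_ball_norm_rpow_neg_le μ (by positivity) hαp
  refine ⟨μ (ball (0 : E) 1) ^ (1 / u - 1 / p) * C ^ (1 / p),
    mul_ne_top (rpow_ne_top_of_ne_zero (measure_ball_pos μ 0 one_pos).ne' measure_ball_lt_top.ne)
      (rpow_ne_top_of_nonneg (by positivity) hC), fun y r hr => ?_⟩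
  rw [← measure_ball_rpow_mul_ofReal_rpow_mul_rpow μ y hp hr]
  unfold morreyQuotient
  gcongr
  calc ∫⁻ x in ball y r, ENNReal.ofReal (|f x| ^ p) ∂μ
      ≤ ∫⁻ x in ball y r, ENNReal.ofReal (‖x‖ ^ (-(α * p))) ∂μ :=
        lintegral_mono fun x => ofReal_rpow_le_of_abs_le_rpow_neg (norm_nonneg x) hp.le (hf x)
    _ ≤ _ := hball y r hr

theorem lintegral_abs_rpow_ne_top {p α R : ℝ} (hp : 0 < p) (hαp : α * p < finrank ℝ E)
    (hR : 0 < R) {f : E → ℝ} (hf : ∀ x, |f x| ≤ ‖x‖ ^ (-α)) (hsupp : ∀ x, R ≤ ‖x‖ → f x = 0) :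
    ∫⁻ x, ENNReal.ofReal (|f x| ^ p) ∂μ ≠ ∞ := by
  have hsub : Function.support (fun x => ENNReal.ofReal (|f x| ^ p)) ⊆ ball 0 R := fun x hx => by
    by_contra hxR
    rw [mem_ball_zero_iff, not_lt] at hxR
    simp [hsupp x hxR, Real.zero_rpow hp.ne'] at hx
  rw [← setLIntegral_eq_of_support_subset hsub]
  refine ne_top_of_le_ne_top ?_
    (lintegral_mono fun x => ofReal_rpow_le_of_abs_le_rpow_neg (norm_nonneg x) hp.le (hf x))
  rw [lintegral_ball_zero_norm_rpow_neg μ _ hR]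
  exact mul_ne_top ofReal_ne_top (lintegral_ball_zero_norm_rpow_neg_ne_top μ hαp)

theorem iSup_morreyQuotient_ne_top {p u α R : ℝ} (hp : 0 < p) (hpu : p < u) (hα : 0 ≤ α)
    (hαu : α ≤ (finrank ℝ E : ℝ) / u) (hR : 0 < R) {f : E → ℝ} (hf : ∀ x, |f x| ≤ ‖x‖ ^ (-α))
    (hsupp : ∀ x, R ≤ ‖x‖ → f x = 0) :
    ⨆ (y : E) (r : ℝ) (_ : 0 < r), morreyQuotient μ p u f y r ≠ ∞ := by
  have hαp : α * p < finrank ℝ E := by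
    calc α * p ≤ (finrank ℝ E : ℝ) / u * p := by gcongr
      _ < finrank ℝ E := by
        rw [div_mul_eq_mul_div, div_lt_iff₀ (hp.trans hpu)]
        exact mul_lt_mul_of_pos_left hpu (by exact_mod_cast finrank_pos)
  obtain ⟨M, hM, hsmall⟩ := exists_morreyQuotient_le μ (u := u) hp hα hαp hf
  have hB : μ (ball (0 : E) 1) ^ (1 / u - 1 / p) *
      (∫⁻ x, ENNReal.ofReal (|f x| ^ p) ∂μ) ^ (1 / p) ≠ ∞ :=
    mul_ne_top (rpow_ne_top_of_ne_zero (measure_ball_pos μ 0 one_pos).ne' measure_ball_lt_top.ne)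
      (rpow_ne_top_of_nonneg (by positivity) (lintegral_abs_rpow_ne_top μ hp hαp hR hf hsupp))
  refine ne_top_of_le_ne_top (add_ne_top.2 ⟨hM, hB⟩) (iSup₂_le fun y r => iSup_le fun hr => ?_)
  rcases le_or_gt r 1 with hr1 | hr1
  · refine ((hsmall y r hr).trans ?_).trans le_self_add
    exact mul_le_of_le_one_left' (rpow_le_one (ofReal_le_one.2 hr1) (sub_nonneg.2 hαu))
  · exact (morreyQuotient_le_of_one_le μ hp hpu.le f y hr1.le).trans le_add_self

theorem morreyQuotient_zero_eq {p u α : ℝ} (hp : 0 < p) {f : E → ℝ}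
    (hf : ∀ x ∈ ball (0 : E) 1, |f x| = ‖x‖ ^ (-α)) {r : ℝ} (hr : 0 < r) (hr1 : r ≤ 1) :
    morreyQuotient μ p u f 0 r = ENNReal.ofReal r ^ ((finrank ℝ E : ℝ) / u - α) *
      (μ (ball (0 : E) 1) ^ (1 / u - 1 / p) *
        (∫⁻ x in ball (0 : E) 1, ENNReal.ofReal (‖x‖ ^ (-(α * p))) ∂μ) ^ (1 / p)) := by
  rw [← measure_ball_rpow_mul_ofReal_rpow_mul_rpow μ 0 hp hr,
    ← lintegral_ball_zero_norm_rpow_neg μ _ hr]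
  unfold morreyQuotient
  congr 2
  refine setLIntegral_congr_fun measurableSet_ball fun x hx => ?_
  rw [hf x (ball_subset_ball hr1 hx), ← Real.rpow_mul (norm_nonneg x), neg_mul]

theorem exists_tendsto_morreyQuotient_zero {p u α : ℝ} (hp : 0 < p)
    (hαu : (finrank ℝ E : ℝ) / u ≤ α)
    {f : E → ℝ} (hf : ∀ x ∈ ball (0 : E) 1, |f x| = ‖x‖ ^ (-α)) :
    ∃ K ≠ 0, Tendsto (morreyQuotient μ p u f 0) (𝓝[>] 0)
      (𝓝 ((0 : ℝ≥0∞) ^ ((finrank ℝ E : ℝ) / u - α) * K)) := by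
  refine ⟨μ (ball (0 : E) 1) ^ (1 / u - 1 / p) *
      (∫⁻ x in ball (0 : E) 1, ENNReal.ofReal (‖x‖ ^ (-(α * p))) ∂μ) ^ (1 / p), ?_, ?_⟩
  · refine mul_ne_zero ?_ ?_
    · simp [ENNReal.rpow_eq_zero_iff, (measure_ball_pos μ (0 : E) one_pos).ne',
        measure_ball_lt_top.ne]
    · simp [ENNReal.rpow_eq_zero_iff, lintegral_ball_zero_norm_rpow_neg_ne_zero μ, hp.le]
  have hofReal : Tendsto ENNReal.ofReal (𝓝[>] 0) (𝓝 0) := by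
    simpa using (ENNReal.continuous_ofReal.tendsto 0).mono_left nhdsWithin_le_nhds
  refine Tendsto.congr' ?_ (ENNReal.Tendsto.mul_const
    ((ENNReal.continuous_rpow_const.tendsto 0).comp hofReal) (Or.inl ?_))
  · filter_upwards [Ioc_mem_nhdsGT one_pos] with r hr
    exact (morreyQuotient_zero_eq μ hp hf hr.1 hr.2).symm
  · simp [ENNReal.rpow_eq_zero_iff, hαu]

theorem iSup_morreyQuotient_eq_top {p u α : ℝ} (hp : 0 < p) (hαu : (finrank ℝ E : ℝ) / u < α)
    {f : E → ℝ} (hf : ∀ x ∈ ball (0 : E) 1, |f x| = ‖x‖ ^ (-α)) :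
    ⨆ (y : E) (r : ℝ) (_ : 0 < r), morreyQuotient μ p u f y r = ∞ := by
  obtain ⟨K, hK, hlim⟩ := exists_tendsto_morreyQuotient_zero μ hp hαu.le hf
  rw [zero_rpow_of_neg (by linarith), top_mul hK] at hlim
  refine top_le_iff.1 (le_of_tendsto hlim ?_)
  filter_upwards [self_mem_nhdsWithin] with r hr
  exact le_iSup₂_of_le (0 : E) r (le_iSup_of_le hr le_rfl)

theorem not_tendsto_morreyQuotient_zero {p u α : ℝ} (hp : 0 < p)
    (hαu : α = (finrank ℝ E : ℝ) / u) {f : E → ℝ}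
    (hf : ∀ x ∈ ball (0 : E) 1, |f x| = ‖x‖ ^ (-α)) :
    ¬Tendsto (morreyQuotient μ p u f 0) (𝓝[>] 0) (𝓝 0) := fun h => by
  obtain ⟨K, hK, hlim⟩ := exists_tendsto_morreyQuotient_zero μ hp hαu.ge hf
  rw [hαu, sub_self, rpow_zero, one_mul] at hlim
  exact hK (tendsto_nhds_unique hlim h)

end AddHaar

theorem stmt_16_general (d : ℕ) (hd : 0 < d) (p u α : ℝ) (hp : 1 ≤ p) (hpu : p < u) (hα : 0 < α)
    (ψ : EuclideanSpace ℝ (Fin d) → ℝ)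
    (hrange : ∀ x, ψ x ∈ Set.Icc (0 : ℝ) 1)
    (hone : ∀ x : EuclideanSpace ℝ (Fin d), ‖x‖ ≤ 1 → ψ x = 1)
    (hzero : ∀ x : EuclideanSpace ℝ (Fin d), 3 / 2 ≤ ‖x‖ → ψ x = 0) :
    (α ≤ (d : ℝ) / u →
      (⨆ (y : EuclideanSpace ℝ (Fin d)) (r : ℝ) (_ : 0 < r),
        (volume (ball y r)) ^ (1 / u - 1 / p) *
          (∫⁻ x in ball y r, ENNReal.ofReal (|ψ x * ‖x‖ ^ (-α)| ^ p)) ^ (1 / p)) ≠ ∞) ∧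
    ((d : ℝ) / u < α →
      (⨆ (y : EuclideanSpace ℝ (Fin d)) (r : ℝ) (_ : 0 < r),
        (volume (ball y r)) ^ (1 / u - 1 / p) *
          (∫⁻ x in ball y r, ENNReal.ofReal (|ψ x * ‖x‖ ^ (-α)| ^ p)) ^ (1 / p)) = ∞) ∧
    (α = (d : ℝ) / u →
      ¬ Tendsto
        (fun r : ℝ =>
          (volume (ball (0 : EuclideanSpace ℝ (Fin d)) r)) ^ (1 / u - 1 / p) *
            (∫⁻ x in ball (0 : EuclideanSpace ℝ (Fin d)) r,
              ENNReal.ofReal (|ψ x * ‖x‖ ^ (-α)| ^ p)) ^ (1 / p))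
        (nhdsWithin 0 (Set.Ioi 0)) (nhds 0)) := by
  have : Nontrivial (EuclideanSpace ℝ (Fin d)) :=
    Module.nontrivial_of_finrank_pos (R := ℝ) (by simpa using hd)
  have hp₀ : 0 < p := by linarith
  have hdim : (finrank ℝ (EuclideanSpace ℝ (Fin d)) : ℝ) = d := by simp
  have hf_le (x : EuclideanSpace ℝ (Fin d)) : |ψ x * ‖x‖ ^ (-α)| ≤ ‖x‖ ^ (-α) := by
    rw [abs_mul, abs_of_nonneg (hrange x).1, abs_of_nonneg (by positivity)]
    exact mul_le_of_le_one_left (by positivity) (hrange x).2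
  have hf_eq : ∀ x ∈ ball (0 : EuclideanSpace ℝ (Fin d)) 1, |ψ x * ‖x‖ ^ (-α)| = ‖x‖ ^ (-α) :=
    fun x hx => by rw [hone x (mem_ball_zero_iff.1 hx).le, one_mul, abs_of_nonneg (by positivity)]
  have hsupp (x : EuclideanSpace ℝ (Fin d)) (hx : 3 / 2 ≤ ‖x‖) : ψ x * ‖x‖ ^ (-α) = 0 := by
    rw [hzero x hx, zero_mul]
  refine ⟨fun hαu => ?_, fun hαu => ?_, fun hαu => ?_⟩
  · exact iSup_morreyQuotient_ne_top volume hp₀ hpu hα.le (by rwa [hdim]) (by norm_num) hf_le hsupp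
  · exact iSup_morreyQuotient_eq_top volume hp₀ (by rwa [hdim]) hf_eq
  · exact not_tendsto_morreyQuotient_zero volume hp₀ (by rwa [hdim]) hf_eq

/-- For `f_α(x) = ψ(x)|x|^{−α}` with a cutoff `ψ` (`ψ = 1` on `|x| ≤ 1`, `ψ = 0` on `|x| ≥ 3/2`,
`0 ≤ ψ ≤ 1`): `f_α ∈ M^u_p(ℝ^d)` iff `α ≤ d/u`; and for `α = d/u` the quantity
`|B(0,r)|^{1/u−1/p} ‖f_α‖_{L_p(B(0,r))}` does not tend to `0` as `r → 0`. -/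
theorem stmt_16 (d : ℕ) (hd : 0 < d) (p u α : ℝ) (hp : 1 ≤ p) (hpu : p < u) (hα : 0 < α)
    (ψ : EuclideanSpace ℝ (Fin d) → ℝ) (hmeas : Measurable ψ)
    (hrange : ∀ x, ψ x ∈ Set.Icc (0 : ℝ) 1)
    (hone : ∀ x : EuclideanSpace ℝ (Fin d), ‖x‖ ≤ 1 → ψ x = 1)
    (hzero : ∀ x : EuclideanSpace ℝ (Fin d), 3 / 2 ≤ ‖x‖ → ψ x = 0) :
    (α ≤ (d : ℝ) / u →
      (⨆ (y : EuclideanSpace ℝ (Fin d)) (r : ℝ) (_ : 0 < r),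
        (volume (ball y r)) ^ (1 / u - 1 / p) *
          (∫⁻ x in ball y r, ENNReal.ofReal (|ψ x * ‖x‖ ^ (-α)| ^ p)) ^ (1 / p)) ≠ ∞) ∧
    ((d : ℝ) / u < α →
      (⨆ (y : EuclideanSpace ℝ (Fin d)) (r : ℝ) (_ : 0 < r),
        (volume (ball y r)) ^ (1 / u - 1 / p) *
          (∫⁻ x in ball y r, ENNReal.ofReal (|ψ x * ‖x‖ ^ (-α)| ^ p)) ^ (1 / p)) = ∞) ∧
    (α = (d : ℝ) / u →
      ¬ Tendsto
        (fun r : ℝ =>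
          (volume (ball (0 : EuclideanSpace ℝ (Fin d)) r)) ^ (1 / u - 1 / p) *
            (∫⁻ x in ball (0 : EuclideanSpace ℝ (Fin d)) r,
              ENNReal.ofReal (|ψ x * ‖x‖ ^ (-α)| ^ p)) ^ (1 / p))
        (nhdsWithin 0 (Set.Ioi 0)) (nhds 0)) :=
  stmt_16_general d hd p u α hp hpu hα ψ hrange hone hzero
end

section
/- Let d ∈ ℕ, m ∈ ℕ, α > 0, 1 ≤ p < u < ∞ with m + α = d/u, and let A := { x ∈ ℝ^d : |x| < 1, x_1 ≥ max(|x_2|, …, |x_d|)/c } for a constant c ≥ 1. Then there exist constants E_1, E_2 > 0 such that for all 0 < r < 1, |B(0,r)|^{1/u − 1/p} ( ∫_{B(0,r) ∩ A} |x|^{−(α+m)p} dx )^{1/p} ≥ E_2 r^{d/u − (α+m)} = E_2 > 0. In particular this quantity does not tend to 0 as r → 0. -/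
/-! The ball of radius `r/4` centred at `(r/2) e₁` lies in `B(0,r) ∩ A` and avoids the origin, and
on it `|x|^{-β} ≥ r^{-β}`. Hence the integral is at least a constant times `r^{d-β}`, and since
`|B(0,r)| = |B(0,1)| r^d`, the whole quantity is at least a constant times
`r^{d(1/u-1/p) + (d-β)/p} = r^{d/u-(α+m)} = 1` for `β = (α+m)p`. -/

open MeasureTheory Metric ENNReal Filter

def truncCone {ι : Type*} [Fintype ι] (i : ι) (c : ℝ) : Set (EuclideanSpace ℝ ι) :=
  {x | ‖x‖ < 1 ∧ 0 ≤ x i ∧ ∀ k, k ≠ i → |x k| ≤ c * x i}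

theorem ofReal_rpow_neg_mul_le_setLIntegral {E : Type*} [NormedAddCommGroup E] [MeasurableSpace E]
    (μ : Measure E) {s t : Set E} {r β : ℝ} (hβ : 0 ≤ β) (hs : MeasurableSet s) (hst : s ⊆ t)
    (hsr : s ⊆ ball 0 r) (hs0 : (0 : E) ∉ s) :
    ENNReal.ofReal (r ^ (-β)) * μ s ≤ ∫⁻ x in t, ENNReal.ofReal (‖x‖ ^ (-β)) ∂μ := by
  have hle : ∀ x ∈ s, ENNReal.ofReal (r ^ (-β)) ≤ ENNReal.ofReal (‖x‖ ^ (-β)) := fun x hx =>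
    ENNReal.ofReal_le_ofReal <| Real.rpow_le_rpow_of_nonpos
      (norm_pos_iff.2 fun h => hs0 (h ▸ hx)) (mem_ball_zero_iff.1 (hsr hx)).le (neg_nonpos.2 hβ)
  calc ENNReal.ofReal (r ^ (-β)) * μ s = ∫⁻ _ in s, ENNReal.ofReal (r ^ (-β)) ∂μ :=
        (setLIntegral_const s _).symm
    _ ≤ ∫⁻ x in s, ENNReal.ofReal (‖x‖ ^ (-β)) ∂μ := setLIntegral_mono' hs hle
    _ ≤ _ := lintegral_mono_set hst

section
variable {ι : Type*} [Fintype ι]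

theorem volume_ball_eq_ofReal (x : EuclideanSpace ℝ ι) {r : ℝ} (hr : 0 < r) :
    volume (ball x r) =
      ENNReal.ofReal (r ^ Fintype.card ι * (volume (ball (0 : EuclideanSpace ℝ ι) 1)).toReal) := by
  rw [Measure.addHaar_ball_of_pos _ _ hr, finrank_euclideanSpace,
    ENNReal.ofReal_mul (by positivity), ENNReal.ofReal_toReal measure_ball_lt_top.ne]

variable [DecidableEq ι]

theorem ball_single_subset_ball_inter_truncCone (i : ι) {r c : ℝ} (hr : r ≤ 1) (hc : 1 ≤ c) :
    ball (EuclideanSpace.single i (r / 2)) (r / 4) ⊆ ball 0 r ∩ truncCone i c := by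
  intro x hx
  set y := EuclideanSpace.single i (r / 2)
  have hxy : ‖x - y‖ < r / 4 := mem_ball_iff_norm.1 hx
  have hr0 : 0 < r := by linarith [norm_nonneg (x - y)]
  have hcoord : ∀ k, |x k - y k| < r / 4 := fun k =>
    (PiLp.norm_apply_le (x - y) k).trans_lt hxy
  have hxi : r / 4 < x i := by
    have := hcoord i
    simp only [y, PiLp.single_apply, if_true] at this
    linarith [abs_lt.1 this]
  have hnorm : ‖x‖ < 3 * r / 4 := by
    have hy : ‖y‖ = r / 2 := by simp [y, abs_of_pos hr0]
    linarith [norm_le_norm_add_norm_sub' x y]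
  refine ⟨mem_ball_zero_iff.2 (by linarith), by linarith, by linarith, fun k hk => ?_⟩
  have := hcoord k
  simp only [y, PiLp.single_apply, hk, if_false, sub_zero] at this
  nlinarith [abs_lt.1 this]

theorem zero_notMem_ball_single (i : ι) (r : ℝ) :
    (0 : EuclideanSpace ℝ ι) ∉ ball (EuclideanSpace.single i (r / 2)) (r / 4) := by
  intro h
  rw [mem_ball, dist_zero_left, PiLp.norm_single, Real.norm_eq_abs] at h
  linarith [le_abs_self (r / 2), abs_nonneg (r / 2)]

theorem exists_pos_ofReal_mul_rpow_le_volume_ball_rpow_mul_setLIntegral (i : ι) {c p β : ℝ}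
    (σ : ℝ) (hc : 1 ≤ c) (hp : 0 < p) (hβ : 0 ≤ β) :
    ∃ K > 0, ∀ r, 0 < r → r ≤ 1 →
      ENNReal.ofReal (K * r ^ (Fintype.card ι * σ + (Fintype.card ι - β) / p)) ≤
        volume (ball (0 : EuclideanSpace ℝ ι) r) ^ σ *
          (∫⁻ x in ball 0 r ∩ truncCone i c, ENNReal.ofReal (‖x‖ ^ (-β))) ^ (1 / p) := by
  set n := Fintype.card ι
  set v := (volume (ball (0 : EuclideanSpace ℝ ι) 1)).toReal
  have hv : 0 < v := ENNReal.toReal_pos (measure_ball_pos volume 0 one_pos).ne'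
    measure_ball_lt_top.ne
  refine ⟨v ^ σ * (v / 4 ^ n) ^ (1 / p), by positivity, fun r hr hr1 => ?_⟩
  have hscale : (r ^ n * v) ^ σ * (r ^ (-β) * ((r / 4) ^ n * v)) ^ (1 / p) =
      v ^ σ * (v / 4 ^ n) ^ (1 / p) * r ^ (n * σ + (n - β) / p) := by
    have h : r ^ (-β) * ((r / 4) ^ n * v) = r ^ ((n : ℝ) - β) * (v / 4 ^ n) := by
      rw [div_pow, Real.rpow_sub hr, Real.rpow_neg hr.le, Real.rpow_natCast]
      field_simp
    rw [h, ← Real.rpow_natCast, Real.mul_rpow (by positivity) hv.le,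
      Real.mul_rpow (by positivity) (by positivity), ← Real.rpow_mul hr.le, ← Real.rpow_mul hr.le,
      Real.rpow_add hr]
    ring_nf
  have hsub := ball_single_subset_ball_inter_truncCone i hr1 hc
  have hI := ofReal_rpow_neg_mul_le_setLIntegral volume hβ measurableSet_ball hsub
    (fun x hx => (hsub hx).1) (zero_notMem_ball_single i r)
  rw [volume_ball_eq_ofReal _ (by positivity)] at hI
  rw [volume_ball_eq_ofReal _ hr, ← hscale, ENNReal.ofReal_mul (by positivity),
    ← ENNReal.ofReal_rpow_of_pos (by positivity), ← ENNReal.ofReal_rpow_of_nonneg (by positivity)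
    (by positivity)]
  gcongr
  rwa [ENNReal.ofReal_mul (by positivity)]
end

theorem not_tendsto_nhdsGT_zero_of_le {f : ℝ → ℝ≥0∞} {ε : ℝ≥0∞} (hε : 0 < ε)
    (hf : ∀ r, 0 < r → r < 1 → ε ≤ f r) : ¬Tendsto f (nhdsWithin 0 (Set.Ioi 0)) (nhds 0) := by
  intro h
  have h01 : ∀ᶠ r in nhdsWithin (0 : ℝ) (Set.Ioi 0), r ∈ Set.Ioo 0 1 := Ioo_mem_nhdsGT one_pos
  obtain ⟨r, hr, hfr⟩ := (h01.and (h.eventually (gt_mem_nhds hε))).exists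
  exact (hf r hr.1 hr.2).not_gt hfr

theorem stmt_19_general (d m : ℕ) (hd : 0 < d) (α p u c : ℝ)
    (hp : 1 ≤ p) (hpu : p < u) (hmα : (m : ℝ) + α = (d : ℝ) / u) (hc : 1 ≤ c) :
    ∃ E₁ E₂ : ℝ, 0 < E₁ ∧ 0 < E₂ ∧
      (∀ r : ℝ, 0 < r → r < 1 →
        ENNReal.ofReal (E₂ * r ^ ((d : ℝ) / u - (α + m))) ≤
          (volume (ball (0 : EuclideanSpace ℝ (Fin d)) r)) ^ (1 / u - 1 / p) *
            (∫⁻ x in ball (0 : EuclideanSpace ℝ (Fin d)) r ∩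
                {x : EuclideanSpace ℝ (Fin d) | ‖x‖ < 1 ∧ 0 ≤ x ⟨0, hd⟩ ∧
                  ∀ k : Fin d, k ≠ ⟨0, hd⟩ → |x k| ≤ c * x ⟨0, hd⟩},
              ENNReal.ofReal (‖x‖ ^ (-((α + m) * p)))) ^ (1 / p) ∧
        E₂ * r ^ ((d : ℝ) / u - (α + m)) = E₂) ∧
      ¬ Tendsto
        (fun r : ℝ =>
          (volume (ball (0 : EuclideanSpace ℝ (Fin d)) r)) ^ (1 / u - 1 / p) *
            (∫⁻ x in ball (0 : EuclideanSpace ℝ (Fin d)) r ∩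
                {x : EuclideanSpace ℝ (Fin d) | ‖x‖ < 1 ∧ 0 ≤ x ⟨0, hd⟩ ∧
                  ∀ k : Fin d, k ≠ ⟨0, hd⟩ → |x k| ≤ c * x ⟨0, hd⟩},
              ENNReal.ofReal (‖x‖ ^ (-((α + m) * p)))) ^ (1 / p))
        (nhdsWithin 0 (Set.Ioi 0)) (nhds 0) := by
  have hp0 : 0 < p := by linarith
  have hu0 : 0 < u := by linarith
  have hβ : 0 ≤ (α + m) * p := by rw [add_comm, hmα]; positivity
  have hexp : (Fintype.card (Fin d) : ℝ) * (1 / u - 1 / p) +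
      (Fintype.card (Fin d) - (α + m) * p) / p = (d : ℝ) / u - (α + m) := by
    rw [Fintype.card_fin]; field_simp; ring
  have hexp0 : (d : ℝ) / u - (α + m) = 0 := by linarith
  obtain ⟨K, hK, hbound⟩ := exists_pos_ofReal_mul_rpow_le_volume_ball_rpow_mul_setLIntegral
    (⟨0, hd⟩ : Fin d) (1 / u - 1 / p) hc hp0 hβ
  simp only [hexp, hexp0, Real.rpow_zero, mul_one] at hbound
  refine ⟨1, K, one_pos, hK, fun r hr hr1 => ⟨?_, by rw [hexp0, Real.rpow_zero, mul_one]⟩,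
    not_tendsto_nhdsGT_zero_of_le (ENNReal.ofReal_pos.2 hK) fun r hr hr1 => hbound r hr hr1.le⟩
  rw [hexp0, Real.rpow_zero, mul_one]
  exact hbound r hr hr1.le

/-- For the cone `A = {x : |x| < 1, x₁ ≥ max(|x₂|,…,|x_d|)/c}` and `m + α = d/u`, there are
`E₁, E₂ > 0` such that for `0 < r < 1`,
`|B(0,r)|^{1/u−1/p} (∫_{B(0,r)∩A} |x|^{−(α+m)p} dx)^{1/p} ≥ E₂ r^{d/u−(α+m)} = E₂ > 0`;
in particular this quantity does not tend to `0` as `r → 0`. -/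
theorem stmt_19 (d m : ℕ) (hd : 0 < d) (hm : 0 < m) (α p u c : ℝ)
    (hα : 0 < α) (hp : 1 ≤ p) (hpu : p < u) (hmα : (m : ℝ) + α = (d : ℝ) / u) (hc : 1 ≤ c) :
    ∃ E₁ E₂ : ℝ, 0 < E₁ ∧ 0 < E₂ ∧
      (∀ r : ℝ, 0 < r → r < 1 →
        ENNReal.ofReal (E₂ * r ^ ((d : ℝ) / u - (α + m))) ≤
          (volume (ball (0 : EuclideanSpace ℝ (Fin d)) r)) ^ (1 / u - 1 / p) *
            (∫⁻ x in ball (0 : EuclideanSpace ℝ (Fin d)) r ∩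
                {x : EuclideanSpace ℝ (Fin d) | ‖x‖ < 1 ∧ 0 ≤ x ⟨0, hd⟩ ∧
                  ∀ k : Fin d, k ≠ ⟨0, hd⟩ → |x k| ≤ c * x ⟨0, hd⟩},
              ENNReal.ofReal (‖x‖ ^ (-((α + m) * p)))) ^ (1 / p) ∧
        E₂ * r ^ ((d : ℝ) / u - (α + m)) = E₂) ∧
      ¬ Tendsto
        (fun r : ℝ =>
          (volume (ball (0 : EuclideanSpace ℝ (Fin d)) r)) ^ (1 / u - 1 / p) *
            (∫⁻ x in ball (0 : EuclideanSpace ℝ (Fin d)) r ∩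
                {x : EuclideanSpace ℝ (Fin d) | ‖x‖ < 1 ∧ 0 ≤ x ⟨0, hd⟩ ∧
                  ∀ k : Fin d, k ≠ ⟨0, hd⟩ → |x k| ≤ c * x ⟨0, hd⟩},
              ENNReal.ofReal (‖x‖ ^ (-((α + m) * p)))) ^ (1 / p))
        (nhdsWithin 0 (Set.Ioi 0)) (nhds 0) :=
  stmt_19_general d m hd α p u c hp hpu hmα hc
end
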